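/- arXiv:1303.7100 — 3 statements merged into one kernel-verified Lean document; each statement's English description precedes it below -/
import Mathlib

section
/- Under Assumptions (H), the Dyson–Phillips iterates satisfy the convolution identity: for every n ∈ ℕ, every 0 ≤ s ≤ r ≤ t and every u ∈ E, V_n(t,s)u = Σ_{k=0}^n V_k(t,r) V_{n−k}(r,s)u. -/
/-!
Split the integral defining `V (n + 1) t s u` at `r`. By the cocycle property of `U`, the part
over `[r, t]` is `V (n + 1) t r (U r s u)`; on the part over `[s, r]` the induction hypothesis
expands the integrand into `n + 1` terms, the `k`-th of which integrates to
`V k t r (V (n - k + 1) r s u)`.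

The analytic content is that all these integrands are Bochner integrable. On the positive cone the
iterates are contractions, so `‖V m c τ (B τ (U τ s u))‖ ≤ ‖B τ (U τ s u)‖`, which is integrable by
(H)(iv); the cone is generating, so this extends to all `u`, provided `τ ↦ V m c τ y` is
measurable. That is proved by induction on `m`: `V (m + 1) c τ y` is the right limit as `σ ↓ τ` of
`V (m + 1) c σ (U σ τ y)`, which is continuous in `τ` for each fixed `σ`.
-/

open MeasureTheory Set Filter Topology

/-- An abstract state space: a real normed space together with a generating positive
cone on which the norm is additive, an evolution family `U`, and a family of
(unbounded) nonnegative operators `B t` with domains `DB t`, satisfying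
Assumptions (H) of the paper. -/
structure PerturbedSetting (E : Type*) [NormedAddCommGroup E] [NormedSpace ℝ E] where
  pos : Set E
  zero_mem : (0 : E) ∈ pos
  add_mem : ∀ u v : E, u ∈ pos → v ∈ pos → u + v ∈ pos
  smul_mem : ∀ c : ℝ, 0 ≤ c → ∀ u ∈ pos, c • u ∈ pos
  generating : ∀ u : E, ∃ v w : E, v ∈ pos ∧ w ∈ pos ∧ u = v - w
  norm_add : ∀ u v : E, u ∈ pos → v ∈ pos → ‖u + v‖ = ‖u‖ + ‖v‖
  U : ℝ → ℝ → E →L[ℝ] E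
  U_cont : ∀ u : E, ContinuousOn (fun p : ℝ × ℝ => U p.1 p.2 u)
    {p : ℝ × ℝ | 0 ≤ p.2 ∧ p.2 ≤ p.1}
  U_comp : ∀ t r s : ℝ, 0 ≤ s → s ≤ r → r ≤ t → ∀ u : E, U t s u = U t r (U r s u)
  U_id : ∀ t : ℝ, 0 ≤ t → ∀ u : E, U t t u = u
  U_bound : ∃ C β : ℝ, 0 < C ∧ 0 < β ∧
    ∀ t s : ℝ, 0 ≤ s → s ≤ t → ‖U t s‖ ≤ C * Real.exp (β * (t - s))
  DB : ℝ → Set E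
  B : ℝ → E → E
  DB_zero : ∀ t : ℝ, (0 : E) ∈ DB t
  DB_add : ∀ t : ℝ, ∀ u ∈ DB t, ∀ v ∈ DB t, u + v ∈ DB t
  DB_smul : ∀ t c : ℝ, ∀ u ∈ DB t, c • u ∈ DB t
  B_add : ∀ t : ℝ, ∀ u ∈ DB t, ∀ v ∈ DB t, B t (u + v) = B t u + B t v
  B_smul : ∀ t c : ℝ, ∀ u ∈ DB t, B t (c • u) = c • B t u
  U_pos : ∀ t s : ℝ, 0 ≤ s → s ≤ t → ∀ u ∈ pos, U t s u ∈ pos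
  U_contr : ∀ t s : ℝ, 0 ≤ s → s ≤ t → ∀ u ∈ pos, ‖U t s u‖ ≤ ‖u‖
  B_pos : ∀ t : ℝ, 0 ≤ t → ∀ u ∈ DB t, u ∈ pos → B t u ∈ pos
  BU_dom : ∀ (u : E) (s : ℝ), 0 ≤ s →
    ∀ᵐ t ∂(volume.restrict (Set.Ici s)), U t s u ∈ DB t
  BU_meas : ∀ (u : E) (s : ℝ), 0 ≤ s →
    AEStronglyMeasurable (fun t => B t (U t s u)) (volume.restrict (Set.Ici s))
  BU_integrable : ∀ u ∈ pos, ∀ s t : ℝ, 0 ≤ s → s ≤ t →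
    IntegrableOn (fun τ => B τ (U τ s u)) (Set.Ioc s t) volume
  BU_int : ∀ u ∈ pos, ∀ s t : ℝ, 0 ≤ s → s ≤ t →
    (∫ τ in s..t, ‖B τ (U τ s u)‖) ≤ ‖u‖ - ‖U t s u‖

section Measurability

variable {α 𝕜 E F : Type*} [MeasurableSpace α] {μ : Measure α} [NontriviallyNormedField 𝕜]
  [NormedAddCommGroup E] [NormedSpace 𝕜 E] [NormedAddCommGroup F] [NormedSpace 𝕜 F]

theorem AEStronglyMeasurable.clm_apply_of_forall {T : α → E →L[𝕜] F}
    (hT : ∀ y, AEStronglyMeasurable (fun a => T a y) μ) {g : α → E}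
    (hg : AEStronglyMeasurable g μ) : AEStronglyMeasurable (fun a => T a (g a)) μ := by
  have hsimple (φ : SimpleFunc α E) : AEStronglyMeasurable (fun a => T a (φ a)) μ := by
    induction φ using SimpleFunc.induction with
    | @const y s hs =>
      convert (hT y).indicator hs using 1
      funext a
      by_cases ha : a ∈ s <;> simp [ha]
    | @add φ ψ _ hφ hψ =>
      simp only [SimpleFunc.coe_add, Pi.add_apply, map_add]
      exact hφ.add hψ
  obtain ⟨g', hg'_meas, hgg'⟩ := hg
  refine (aestronglyMeasurable_of_tendsto_ae atTop (fun n => hsimple (hg'_meas.approx n))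
    (ae_of_all _ fun a => ((T a).continuous.tendsto _).comp (hg'_meas.tendsto_approx a))).congr ?_
  filter_upwards [hgg'] with a ha
  rw [ha]

theorem aestronglyMeasurable_of_tendsto_nhdsWithin_Icc {X : Type*} [TopologicalSpace X]
    [TopologicalSpace.PseudoMetrizableSpace X] {μ : Measure ℝ} {f : ℝ → X} {H : ℝ → ℝ → X}
    {a c : ℝ} (hH : ∀ p, AEStronglyMeasurable (H p) (μ.restrict (Icc a p)))
    (hf : ∀ τ ∈ Icc a c, Tendsto (fun σ => H σ τ) (𝓝[Icc τ c] τ) (𝓝 (f τ))) :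
    AEStronglyMeasurable f (μ.restrict (Icc a c)) := by
  -- Approximate by `H σ τ` with `σ` the next point of the dyadic grid of mesh `2⁻ʲ` (capped at
  -- `c`): on each of the countably many pieces `k j ⁻¹' {i}` this is a single `H p`.
  set k : ℕ → ℝ → ℤ := fun j τ => ⌈τ * 2 ^ j⌉
  set r : ℕ → ℝ → ℝ := fun j τ => min c (k j τ / 2 ^ j)
  have hr_mem (j : ℕ) {τ : ℝ} (hτ : τ ≤ c) : r j τ ∈ Icc τ c :=
    ⟨le_min hτ ((le_div_iff₀ (by positivity)).2 (Int.le_ceil _)), min_le_left _ _⟩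
  have hr_le (j : ℕ) (τ : ℝ) : r j τ ≤ τ + (2 ^ j)⁻¹ := by
    refine (min_le_right _ _).trans ((div_le_iff₀ (by positivity)).2 ?_)
    calc (k j τ : ℝ) ≤ τ * 2 ^ j + 1 := (Int.ceil_lt_add_one (τ * 2 ^ j)).le
      _ = (τ + (2 ^ j)⁻¹) * 2 ^ j := by field_simp
  have hr_tendsto {τ : ℝ} (hτ : τ ≤ c) : Tendsto (fun j => r j τ) atTop (𝓝[Icc τ c] τ) := by
    refine tendsto_nhdsWithin_iff.2 ⟨?_, Eventually.of_forall fun j => hr_mem j hτ⟩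
    have hpow : Tendsto (fun j : ℕ => τ + ((2 : ℝ) ^ j)⁻¹) atTop (𝓝 τ) := by
      simpa using tendsto_const_nhds.add (tendsto_inv_atTop_zero.comp
        (tendsto_pow_atTop_atTop_of_one_lt (one_lt_two (α := ℝ))))
    exact tendsto_of_tendsto_of_tendsto_of_le_of_le tendsto_const_nhds hpow
      (fun j => (hr_mem j hτ).1) (hr_le · τ)
  refine aestronglyMeasurable_of_tendsto_ae atTop (f := fun j τ => H (r j τ) τ) (fun j => ?_) ?_
  · have hcover : Icc a c ⊆ ⋃ i : ℤ, Icc a c ∩ k j ⁻¹' {i} := fun τ hτ =>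
      mem_iUnion.2 ⟨k j τ, hτ, rfl⟩
    refine (aestronglyMeasurable_iUnion_iff.2 fun i => ?_).mono_measure
      (Measure.restrict_mono hcover le_rfl)
    have hpiece : MeasurableSet (Icc a c ∩ k j ⁻¹' {i}) := measurableSet_Icc.inter
      ((Int.measurable_ceil.comp (measurable_id.mul_const _)) (measurableSet_singleton i))
    have hr_eq : ∀ τ ∈ Icc a c ∩ k j ⁻¹' {i}, r j τ = min c (i / 2 ^ j) := by
      rintro τ ⟨-, hτ⟩
      simp only [r, mem_preimage.1 hτ |> mem_singleton_iff.1]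
    refine ((hH (min c (i / 2 ^ j))).mono_measure (Measure.restrict_mono ?_ le_rfl)).congr ?_
    · intro τ hτ
      exact ⟨hτ.1.1, hr_eq τ hτ ▸ (hr_mem j hτ.1.2).1⟩
    · filter_upwards [ae_restrict_mem hpiece] with τ hτ
      rw [hr_eq τ hτ]
  · filter_upwards [ae_restrict_mem measurableSet_Icc] with τ hτ
    exact (hf τ hτ).comp (hr_tendsto hτ.2)

end Measurability

namespace PerturbedSetting

variable {E : Type*} [NormedAddCommGroup E] [NormedSpace ℝ E] (S : PerturbedSetting E)

theorem continuousOn_U_snd (p : ℝ) (y : E) : ContinuousOn (fun τ => S.U p τ y) (Icc 0 p) :=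
  (S.U_cont y).comp (continuous_const.prodMk continuous_id).continuousOn fun _ hτ => hτ

theorem ae_U_mem_DB (u : E) {s : ℝ} (hs : 0 ≤ s) (c : ℝ) :
    ∀ᵐ τ ∂volume.restrict (Ioc s c), S.U τ s u ∈ S.DB τ :=
  ae_mono (Measure.restrict_mono (fun _ hτ => mem_Ici.2 hτ.1.le) le_rfl) (S.BU_dom u s hs)

theorem aestronglyMeasurable_B_U (u : E) {s : ℝ} (hs : 0 ≤ s) (c : ℝ) :
    AEStronglyMeasurable (fun τ => S.B τ (S.U τ s u)) (volume.restrict (Ioc s c)) :=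
  (S.BU_meas u s hs).mono_measure (Measure.restrict_mono (fun _ hτ => mem_Ici.2 hτ.1.le) le_rfl)

theorem ae_B_U_mem_pos {u : E} (hu : u ∈ S.pos) {s : ℝ} (hs : 0 ≤ s) (c : ℝ) :
    ∀ᵐ τ ∂volume.restrict (Ioc s c), S.B τ (S.U τ s u) ∈ S.pos := by
  filter_upwards [S.ae_U_mem_DB u hs c, ae_restrict_mem measurableSet_Ioc] with τ hdom hτ
  exact S.B_pos τ (hs.trans hτ.1.le) _ hdom (S.U_pos τ s hs hτ.1.le u hu)

theorem B_U_sub_ae_eq {s : ℝ} (hs : 0 ≤ s) (c : ℝ) (v w : E) :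
    (fun τ => S.B τ (S.U τ s (v - w))) =ᵐ[volume.restrict (Ioc s c)]
      fun τ => S.B τ (S.U τ s v) - S.B τ (S.U τ s w) := by
  filter_upwards [S.ae_U_mem_DB v hs c, S.ae_U_mem_DB w hs c] with τ hv hw
  have hneg : S.U τ s (v - w) = S.U τ s v + (-1 : ℝ) • S.U τ s w := by
    rw [map_sub]; module
  rw [hneg, S.B_add τ _ hv _ (S.DB_smul τ (-1) _ hw), S.B_smul τ (-1) _ hw]
  module

structure IsDysonPhillips (V : ℕ → ℝ → ℝ → E →L[ℝ] E) : Prop where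
  zero : ∀ t s : ℝ, 0 ≤ s → s ≤ t → ∀ u : E, V 0 t s u = S.U t s u
  succ : ∀ n : ℕ, ∀ t s : ℝ, 0 ≤ s → s ≤ t → ∀ u : E,
    V (n + 1) t s u = ∫ r in s..t, V n t r (S.B r (S.U r s u))

namespace IsDysonPhillips

variable {S} {V : ℕ → ℝ → ℝ → E →L[ℝ] E} (hV : S.IsDysonPhillips V)
include hV

theorem norm_apply_le (m : ℕ) {c τ : ℝ} (hτ : 0 ≤ τ) (hτc : τ ≤ c) {x : E} (hx : x ∈ S.pos) :
    ‖V m c τ x‖ ≤ ‖x‖ := by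
  induction m generalizing τ x with
  | zero => exact hV.zero c τ hτ hτc x ▸ S.U_contr c τ hτ hτc x hx
  | succ m ih =>
    have hle : ∀ᵐ σ ∂volume.restrict (Ioc τ c),
        ‖V m c σ (S.B σ (S.U σ τ x))‖ ≤ ‖S.B σ (S.U σ τ x)‖ := by
      filter_upwards [S.ae_B_U_mem_pos hx hτ c, ae_restrict_mem measurableSet_Ioc] with σ hpos hσ
      exact ih (hτ.trans hσ.1.le) hσ.2 hpos
    calc ‖V (m + 1) c τ x‖ = ‖∫ σ in τ..c, V m c σ (S.B σ (S.U σ τ x))‖ := by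
          rw [hV.succ m c τ hτ hτc]
      _ ≤ ∫ σ in τ..c, ‖V m c σ (S.B σ (S.U σ τ x))‖ :=
          intervalIntegral.norm_integral_le_integral_norm hτc
      _ ≤ ∫ σ in τ..c, ‖S.B σ (S.U σ τ x)‖ := by
          simp only [intervalIntegral.integral_of_le hτc]
          exact integral_mono_of_nonneg (ae_of_all _ fun σ => norm_nonneg _)
            (S.BU_integrable x hx τ c hτ hτc).norm hle
      _ ≤ ‖x‖ - ‖S.U c τ x‖ := S.BU_int x hx τ c hτ hτc
      _ ≤ ‖x‖ := sub_le_self _ (norm_nonneg _)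

theorem integrableOn_of_aestronglyMeasurable (m : ℕ) {s c : ℝ} (hs : 0 ≤ s) (hsc : s ≤ c)
    (hmeas : ∀ y, AEStronglyMeasurable (fun τ => V m c τ y) (volume.restrict (Ioc s c)))
    (u : E) : IntegrableOn (fun τ => V m c τ (S.B τ (S.U τ s u))) (Ioc s c) := by
  have hpos {v : E} (hv : v ∈ S.pos) :
      IntegrableOn (fun τ => V m c τ (S.B τ (S.U τ s v))) (Ioc s c) := by
    refine (S.BU_integrable v hv s c hs hsc).norm.mono
      (AEStronglyMeasurable.clm_apply_of_forall hmeas (S.aestronglyMeasurable_B_U v hs c)) ?_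
    filter_upwards [S.ae_B_U_mem_pos hv hs c, ae_restrict_mem measurableSet_Ioc] with τ hτpos hτ
    rw [norm_norm]
    exact hV.norm_apply_le m (hs.trans hτ.1.le) hτ.2 hτpos
  obtain ⟨v, w, hv, hw, rfl⟩ := S.generating u
  refine ((hpos hv).sub (hpos hw)).congr ?_
  filter_upwards [S.B_U_sub_ae_eq hs c v w] with τ hτ
  rw [hτ, map_sub, Pi.sub_apply]

theorem succ_apply_eq_integral_add (m : ℕ) {c τ τ' : ℝ} (hτ : 0 ≤ τ) (hττ' : τ ≤ τ')
    (hτ'c : τ' ≤ c) (y : E)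
    (hint : IntegrableOn (fun σ => V m c σ (S.B σ (S.U σ τ y))) (Ioc τ c)) :
    V (m + 1) c τ y =
      (∫ σ in τ..τ', V m c σ (S.B σ (S.U σ τ y))) + V (m + 1) c τ' (S.U τ' τ y) := by
  have hleft : IntervalIntegrable (fun σ => V m c σ (S.B σ (S.U σ τ y))) volume τ τ' :=
    (intervalIntegrable_iff_integrableOn_Ioc_of_le hττ').2
      (hint.mono_set (Ioc_subset_Ioc le_rfl hτ'c))
  have hright : IntervalIntegrable (fun σ => V m c σ (S.B σ (S.U σ τ y))) volume τ' c :=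
    (intervalIntegrable_iff_integrableOn_Ioc_of_le hτ'c).2
      (hint.mono_set (Ioc_subset_Ioc hττ' le_rfl))
  rw [hV.succ m c τ hτ (hττ'.trans hτ'c), hV.succ m c τ' (hτ.trans hττ') hτ'c,
    ← intervalIntegral.integral_add_adjacent_intervals hleft hright]
  congr 1
  refine intervalIntegral.integral_congr fun σ hσ => ?_
  rw [uIcc_of_le hτ'c] at hσ
  simp only [S.U_comp σ τ' τ hτ hττ' hσ.1]

theorem aestronglyMeasurable_apply (m : ℕ) (c : ℝ) (y : E) :
    AEStronglyMeasurable (fun τ => V m c τ y) (volume.restrict (Icc 0 c)) := by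
  induction m generalizing y with
  | zero =>
    refine ((S.continuousOn_U_snd c y).aestronglyMeasurable measurableSet_Icc).congr ?_
    filter_upwards [ae_restrict_mem measurableSet_Icc] with τ hτ
    exact (hV.zero c τ hτ.1 hτ.2 y).symm
  | succ m ih =>
    refine aestronglyMeasurable_of_tendsto_nhdsWithin_Icc
      (H := fun σ τ => V (m + 1) c σ (S.U σ τ y)) (fun p => ?_) fun τ hτ => ?_
    · exact ((V (m + 1) c p).continuous.comp_continuousOn
        (S.continuousOn_U_snd p y)).aestronglyMeasurable measurableSet_Icc
    set F := fun σ => V m c σ (S.B σ (S.U σ τ y))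
    have hint : IntegrableOn F (Ioc τ c) :=
      hV.integrableOn_of_aestronglyMeasurable m hτ.1 hτ.2 (fun y' => (ih y').mono_measure
        (Measure.restrict_mono (Ioc_subset_Icc_self.trans (Icc_subset_Icc_left hτ.1)) le_rfl)) y
    have hsplit : ∀ σ ∈ Icc τ c, V (m + 1) c σ (S.U σ τ y) = V (m + 1) c τ y - ∫ x in τ..σ, F x :=
      fun σ hσ => eq_sub_of_add_eq' (hV.succ_apply_eq_integral_add m hτ.1 hσ.1 hσ.2 y hint).symm
    have hprimitive : Tendsto (fun σ => ∫ x in τ..σ, F x) (𝓝[Icc τ c] τ) (𝓝 0) := by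
      have hcont := intervalIntegral.continuousOn_primitive_interval'
        ((intervalIntegrable_iff_integrableOn_Ioc_of_le hτ.2).2 hint) left_mem_uIcc
      rw [uIcc_of_le hτ.2] at hcont
      simpa using (hcont τ (left_mem_Icc.2 hτ.2)).tendsto
    refine Tendsto.congr' (eventually_nhdsWithin_of_forall fun σ hσ => (hsplit σ hσ).symm) ?_
    simpa using tendsto_const_nhds.sub hprimitive

theorem integrableOn (m : ℕ) {s c : ℝ} (hs : 0 ≤ s) (hsc : s ≤ c) (u : E) :
    IntegrableOn (fun τ => V m c τ (S.B τ (S.U τ s u))) (Ioc s c) :=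
  hV.integrableOn_of_aestronglyMeasurable m hs hsc (fun y => (hV.aestronglyMeasurable_apply m c y)
    |>.mono_measure (Measure.restrict_mono (Ioc_subset_Icc_self.trans (Icc_subset_Icc_left hs))
      le_rfl)) u

variable [CompleteSpace E]

theorem apply_eq_sum (n : ℕ) {t r s : ℝ} (hs : 0 ≤ s) (hsr : s ≤ r) (hrt : r ≤ t) (u : E) :
    V n t s u = ∑ k ∈ Finset.range (n + 1), V k t r (V (n - k) r s u) := by
  induction n generalizing s u with
  | zero =>
    simp only [zero_add, Finset.sum_range_one, Nat.sub_self, hV.zero _ _ hs (hsr.trans hrt),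
      hV.zero _ _ (hs.trans hsr) hrt, hV.zero _ _ hs hsr]
    exact S.U_comp t r s hs hsr hrt u
  | succ n ih =>
    have hinner (k : ℕ) : IntervalIntegrable (fun τ => V k r τ (S.B τ (S.U τ s u))) volume s r :=
      (intervalIntegrable_iff_integrableOn_Ioc_of_le hsr).2 (hV.integrableOn k hs hsr u)
    have hhead : ∫ τ in s..r, V n t τ (S.B τ (S.U τ s u)) =
        ∑ k ∈ Finset.range (n + 1), V k t r (V (n + 1 - k) r s u) :=
      calc ∫ τ in s..r, V n t τ (S.B τ (S.U τ s u))
          = ∫ τ in s..r, ∑ k ∈ Finset.range (n + 1),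
              V k t r (V (n - k) r τ (S.B τ (S.U τ s u))) := by
            refine intervalIntegral.integral_congr fun τ hτ => ?_
            rw [uIcc_of_le hsr] at hτ
            exact ih (hs.trans hτ.1) hτ.2 _
        _ = ∑ k ∈ Finset.range (n + 1),
              V k t r (∫ τ in s..r, V (n - k) r τ (S.B τ (S.U τ s u))) := by
            rw [intervalIntegral.integral_finsetSum fun k _ =>
              ⟨(V k t r).integrable_comp (hinner _).1, (V k t r).integrable_comp (hinner _).2⟩]
            exact Finset.sum_congr rfl fun k _ =>
              (V k t r).intervalIntegral_comp_comm (hinner _)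
        _ = ∑ k ∈ Finset.range (n + 1), V k t r (V (n + 1 - k) r s u) :=
            Finset.sum_congr rfl fun k hk => by
              rw [← hV.succ (n - k) r s hs hsr u,
                Nat.sub_add_comm (Finset.mem_range_succ_iff.1 hk)]
    rw [hV.succ_apply_eq_integral_add n hs hsr hrt u (hV.integrableOn n hs (hsr.trans hrt) u),
      hhead, Finset.sum_range_succ _ (n + 1), Nat.sub_self, hV.zero r s hs hsr]

end IsDysonPhillips

end PerturbedSetting

theorem honesty_stmt2 {E : Type*} [NormedAddCommGroup E] [NormedSpace ℝ E]
    [CompleteSpace E] (S : PerturbedSetting E)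
    (Vn : ℕ → ℝ → ℝ → E →L[ℝ] E)
    (hVn0 : ∀ t s : ℝ, 0 ≤ s → s ≤ t → ∀ u : E, Vn 0 t s u = S.U t s u)
    (hVnrec : ∀ n : ℕ, ∀ t s : ℝ, 0 ≤ s → s ≤ t → ∀ u : E,
      Vn (n+1) t s u = ∫ r in s..t, Vn n t r (S.B r (S.U r s u)))
    :
    ∀ n : ℕ, ∀ t r s : ℝ, 0 ≤ s → s ≤ r → r ≤ t → ∀ u : E,
      Vn n t s u = ∑ k ∈ Finset.range (n+1), Vn k t r (Vn (n-k) r s u) :=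
  fun n _ _ _ hs hsr hrt u =>
    (⟨hVn0, hVnrec⟩ : S.IsDysonPhillips Vn).apply_eq_sum n hs hsr hrt u
end

section
/- Let μ, Σ, b satisfy the kinetic assumptions (measurability, local integrability of t ↦ Σ(t,v), subcriticality ∫_V b(t,v,v') dμ(v) ≤ Σ(t,v') a.e.). Then for every nonnegative φ ∈ L¹(V,dμ) and every s ≥ 0: U_h(t,s)φ ∈ D(B_h(t)) for almost every t ≥ s; the map t ∈ [s,∞) ↦ B_h(t)U_h(t,s)φ ∈ L¹(V,dμ) is measurable; and for every t ≥ s, ∫_s^t ‖B_h(τ)U_h(τ,s)φ‖_{L¹(V,dμ)} dτ ≤ ‖φ‖_{L¹(V,dμ)} − ‖U_h(t,s)φ‖_{L¹(V,dμ)}, with equality whenever σ(t,v) = Σ(t,v) for almost every (t,v) ∈ ℝ₊ × V. -/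
/-
Tonelli's theorem turns the time-integrated gain `∫ₛᵗ ‖B_h(τ) U_h(τ,s) φ‖ dτ` into
`∫_V ∫ₛᵗ σ(τ,v) e^{-∫ₛ^τ Σ(r,v) dr} φ(v) dτ dμ(v)`. Subcriticality `σ ≤ Σ` bounds this by the same
integral with `Σ` in place of `σ`, and for each `v` the time integral `∫ₛᵗ Σ(τ,v) e^{-∫ₛ^τ Σ} dτ`
equals `1 - e^{-∫ₛᵗ Σ}`, because `τ ↦ e^{-∫ₛ^τ Σ(r,v) dr}` is absolutely continuous. The result is
`‖φ‖ - ‖U_h(t,s) φ‖`, with equality when `σ = Σ`; finiteness of the time integral then gives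
`U_h(t,s) φ ∈ D(B_h(t))` for almost every `t ≥ s`.
-/

open MeasureTheory Set Filter
open scoped ENNReal NNReal

theorem LipschitzOnWith.comp_absolutelyContinuousOnInterval {X Y : Type*}
    [PseudoMetricSpace X] [PseudoMetricSpace Y] {g : X → Y} {K : ℝ≥0} {T : Set X} {f : ℝ → X}
    {a b : ℝ} (hg : LipschitzOnWith K g T) (hf : AbsolutelyContinuousOnInterval f a b)
    (hfT : MapsTo f (uIcc a b) T) :
    AbsolutelyContinuousOnInterval (g ∘ f) a b := by
  unfold AbsolutelyContinuousOnInterval at hf ⊢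
  refine squeeze_zero' (Eventually.of_forall fun _ => Finset.sum_nonneg fun _ _ => dist_nonneg)
    ?_ (by simpa using hf.const_mul (K : ℝ))
  rw [eventually_inf_principal]
  filter_upwards with ⟨n, I⟩ hnI
  rw [Finset.mul_sum]
  gcongr with i hi
  exact hg.dist_le_mul _ (hfT (hnI.1 i hi).1) _ (hfT (hnI.1 i hi).2)

theorem IntervalIntegrable.integral_mul_exp_neg_primitive {g : ℝ → ℝ} {s t : ℝ}
    (hg : IntervalIntegrable g volume s t) :
    ∫ τ in s..t, g τ * Real.exp (-∫ r in s..τ, g r) = 1 - Real.exp (-∫ r in s..t, g r) := by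
  set G : ℝ → ℝ := fun τ => ∫ r in s..τ, g r
  have hG : AbsolutelyContinuousOnInterval G s t :=
    hg.absolutelyContinuousOnInterval_intervalIntegral left_mem_uIcc
  obtain ⟨R, hR⟩ :=
    (isCompact_uIcc.image_of_continuousOn hG.continuousOn).isBounded.subset_closedBall 0
  obtain ⟨K, hK⟩ := (Real.contDiff_exp.comp contDiff_neg).contDiffOn.exists_lipschitzOnWith
    one_ne_zero (convex_closedBall 0 R) (isCompact_closedBall 0 R)
  have hE := hK.comp_absolutelyContinuousOnInterval hG (mapsTo_iff_image_subset.2 hR)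
  have hderiv : ∀ᵐ τ, τ ∈ uIoc s t →
      deriv (fun τ => Real.exp (-G τ)) τ = -(g τ * Real.exp (-G τ)) := by
    filter_upwards [hg.ae_hasDerivAt_integral] with τ hτ hτst
    have hGτ : HasDerivAt G (g τ) τ := hτ (uIoc_subset_uIcc hτst) s left_mem_uIcc
    rw [hGτ.fun_neg.exp.deriv]; ring
  have hFTC := hE.integral_deriv_eq_sub
  simp only [Function.comp_def] at hFTC
  rw [intervalIntegral.integral_congr_ae hderiv, intervalIntegral.integral_neg] at hFTC
  simp only [G, intervalIntegral.integral_same, neg_zero, Real.exp_zero] at hFTC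
  linarith

theorem exp_neg_intervalIntegral_le_one {g : ℝ → ℝ} {s t : ℝ} (hg : ∀ r, 0 ≤ g r) (hst : s ≤ t) :
    Real.exp (-∫ r in s..t, g r) ≤ 1 :=
  Real.exp_le_one_iff.2 (neg_nonpos.2 (intervalIntegral.integral_nonneg hst fun r _ => hg r))

theorem lintegral_Ioc_ofReal_mul_exp_neg_primitive {g : ℝ → ℝ} {s t c : ℝ} (hst : s ≤ t)
    (hg0 : ∀ r, 0 ≤ g r) (hg : IntegrableOn g (Ioc s t)) (hc : 0 ≤ c) :
    ∫⁻ τ in Ioc s t, ENNReal.ofReal (g τ) * ENNReal.ofReal (Real.exp (-∫ r in s..τ, g r) * c) =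
      ENNReal.ofReal (c - Real.exp (-∫ r in s..t, g r) * c) := by
  have hgI : IntervalIntegrable g volume s t :=
    (intervalIntegrable_iff_integrableOn_Ioc_of_le hst).2 hg
  have hint : IntegrableOn (fun τ => g τ * Real.exp (-∫ r in s..τ, g r)) (Ioc s t) :=
    hg.mul_continuousOn_of_subset
      (intervalIntegral.continuousOn_primitive_interval' hgI left_mem_uIcc).neg.rexp
      measurableSet_Ioc isCompact_uIcc (Ioc_subset_Icc_self.trans Icc_subset_uIcc)
  calc _ = ∫⁻ τ in Ioc s t,
        ENNReal.ofReal (g τ * Real.exp (-∫ r in s..τ, g r)) * ENNReal.ofReal c := by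
        refine lintegral_congr fun τ => ?_
        rw [← ENNReal.ofReal_mul (hg0 τ), ← ENNReal.ofReal_mul' hc, mul_assoc]
    _ = ENNReal.ofReal ((1 - Real.exp (-∫ r in s..t, g r)) * c) := by
        rw [lintegral_mul_const' _ _ ENNReal.ofReal_ne_top,
          ← ofReal_integral_eq_lintegral_ofReal hint
            (Eventually.of_forall fun τ => mul_nonneg (hg0 τ) (Real.exp_pos _).le),
          ← intervalIntegral.integral_of_le hst, hgI.integral_mul_exp_neg_primitive,
          ENNReal.ofReal_mul' hc]
    _ = _ := by ring_nf

theorem Measurable.intervalIntegral_prod {α : Type*} [MeasurableSpace α] {F : ℝ → α → ℝ}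
    (hF : Measurable (Function.uncurry F)) (s : ℝ) :
    Measurable fun p : ℝ × α => ∫ r in s..p.1, F r p.2 := by
  have hIoc : ∀ {a b : ℝ × α → ℝ}, Measurable a → Measurable b →
      Measurable fun p => ∫ r in Ioc (a p) (b p), F r p.2 := by
    intro a b ha hb
    have hset : MeasurableSet {q : (ℝ × α) × ℝ | q.2 ∈ Ioc (a q.1) (b q.1)} :=
      (measurableSet_lt (ha.comp measurable_fst) measurable_snd).inter
        (measurableSet_le measurable_snd (hb.comp measurable_fst))
    have hK := ((hF.comp (measurable_snd.prodMk measurable_fst.snd)).indicator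
      hset).stronglyMeasurable.integral_prod_right' (ν := volume)
    simp_rw [← integral_indicator measurableSet_Ioc]
    exact hK.measurable
  exact (hIoc measurable_const measurable_fst).sub (hIoc measurable_fst measurable_const)

theorem ae_restrict_Ici_lt_top_of_lintegral_Ioc_ne_top {ν : Measure ℝ} [NullSingletonClass ν]
    {f : ℝ → ℝ≥0∞} {s : ℝ} (hf : Measurable f) (h : ∀ t, s ≤ t → ∫⁻ τ in Ioc s t, f τ ∂ν ≠ ∞) :
    ∀ᵐ t ∂ν.restrict (Ici s), f t < ∞ := by
  have hcover : ⋃ n : ℕ, Ioc s (s + n) = Ioi s := iUnion_Ioc_eq_Ioi_self_iff.2 fun x _ => by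
    obtain ⟨n, hn⟩ := exists_nat_ge (x - s)
    exact ⟨n, by linarith⟩
  rw [← restrict_Ioi_eq_restrict_Ici, ← hcover, ae_restrict_iUnion_iff]
  exact fun n => ae_lt_top hf (h _ (le_add_of_nonneg_right n.cast_nonneg))

section

variable {α β : Type*} [MeasurableSpace α] [MeasurableSpace β] {μ : Measure α} {ν : Measure β}
  [SFinite μ] [SFinite ν]

theorem lintegral_lintegral_ofReal_mul_swap {κ : α → β → ℝ} {w : β → ℝ}
    (hκ : Measurable (Function.uncurry κ)) (hκ0 : ∀ x y, 0 ≤ κ x y) (hw : Measurable w) :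
    ∫⁻ x, ∫⁻ y, ENNReal.ofReal (κ x y * w y) ∂ν ∂μ =
      ∫⁻ y, (∫⁻ x, ENNReal.ofReal (κ x y) ∂μ) * ENNReal.ofReal (w y) ∂ν := by
  simp_rw [ENNReal.ofReal_mul (hκ0 _ _)]
  rw [lintegral_lintegral_swap ((ENNReal.measurable_ofReal.comp hκ).mul
    (ENNReal.measurable_ofReal.comp (hw.comp measurable_snd))).aemeasurable]
  exact lintegral_congr fun y => lintegral_mul_const' _ _ ENNReal.ofReal_ne_top

end

section

variable {α : Type*} [MeasurableSpace α] {μ : Measure α} {Sig : ℝ → α → ℝ}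
  {b : ℝ → α → α → ℝ} {φ : α → ℝ} {s t : ℝ}

theorem measurable_exp_neg_primitive_mul (hSmeas : Measurable (Function.uncurry Sig))
    (hφmeas : Measurable φ) (s : ℝ) :
    Measurable fun p : ℝ × α => Real.exp (-∫ r in s..p.1, Sig r p.2) * φ p.2 :=
  (hSmeas.intervalIntegral_prod s).neg.exp.mul (hφmeas.comp measurable_snd)

theorem integrable_exp_neg_primitive_mul (hSmeas : Measurable (Function.uncurry Sig))
    (hSpos : ∀ t v, 0 ≤ Sig t v) (hφint : Integrable φ μ) (hst : s ≤ t) :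
    Integrable (fun v => Real.exp (-∫ r in s..t, Sig r v) * φ v) μ :=
  hφint.bdd_mul ((hSmeas.intervalIntegral_prod s).neg.exp.comp
      (measurable_const.prodMk measurable_id)).aestronglyMeasurable
    (Eventually.of_forall fun v => by
      rw [Real.norm_of_nonneg (Real.exp_pos _).le]
      exact exp_neg_intervalIntegral_le_one (hSpos · v) hst)

theorem ofReal_integral_exp_neg_primitive_mul_le (hSmeas : Measurable (Function.uncurry Sig))
    (hSpos : ∀ t v, 0 ≤ Sig t v) (hφpos : ∀ v, 0 ≤ φ v) (hφint : Integrable φ μ) (hst : s ≤ t) :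
    ENNReal.ofReal (∫ v, Real.exp (-∫ r in s..t, Sig r v) * φ v ∂μ) ≤
      ENNReal.ofReal (∫ v, φ v ∂μ) :=
  ENNReal.ofReal_le_ofReal <|
    integral_mono (integrable_exp_neg_primitive_mul hSmeas hSpos hφint hst) hφint fun v =>
      mul_le_of_le_one_left (hφpos v) (exp_neg_intervalIntegral_le_one (hSpos · v) hst)

theorem lintegral_Ioc_absorption_add_eq [SFinite μ] (hSmeas : Measurable (Function.uncurry Sig))
    (hSpos : ∀ t v, 0 ≤ Sig t v) (hSint : ∀ᵐ v ∂μ, IntegrableOn (fun τ => Sig τ v) (Ioc s t))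
    (hφmeas : Measurable φ) (hφpos : ∀ v, 0 ≤ φ v) (hφint : Integrable φ μ) (hst : s ≤ t) :
    (∫⁻ τ in Ioc s t, ∫⁻ v, ENNReal.ofReal (Sig τ v) *
        ENNReal.ofReal (Real.exp (-∫ r in s..τ, Sig r v) * φ v) ∂μ) +
      ENNReal.ofReal (∫ v, Real.exp (-∫ r in s..t, Sig r v) * φ v ∂μ) =
      ENNReal.ofReal (∫ v, φ v ∂μ) := by
  have hUint := integrable_exp_neg_primitive_mul hSmeas hSpos hφint hst
  have hU : Measurable fun p : ℝ × α => Real.exp (-∫ r in s..p.1, Sig r p.2) * φ p.2 :=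
    measurable_exp_neg_primitive_mul hSmeas hφmeas s
  rw [lintegral_lintegral_swap ((ENNReal.measurable_ofReal.comp hSmeas).mul
    (ENNReal.measurable_ofReal.comp hU)).aemeasurable]
  calc _ = (∫⁻ v, ENNReal.ofReal (φ v - Real.exp (-∫ r in s..t, Sig r v) * φ v) ∂μ) +
        ENNReal.ofReal (∫ v, Real.exp (-∫ r in s..t, Sig r v) * φ v ∂μ) :=
        congrArg (· + _) (lintegral_congr_ae (hSint.mono fun v hv =>
          lintegral_Ioc_ofReal_mul_exp_neg_primitive hst (hSpos · v) hv (hφpos v)))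
    _ = ENNReal.ofReal (∫ v, φ v - Real.exp (-∫ r in s..t, Sig r v) * φ v ∂μ) +
        ENNReal.ofReal (∫ v, Real.exp (-∫ r in s..t, Sig r v) * φ v ∂μ) :=
        congrArg (· + _) (ofReal_integral_eq_lintegral_ofReal (hφint.sub hUint)
          (Eventually.of_forall fun v => sub_nonneg.2 (mul_le_of_le_one_left (hφpos v)
            (exp_neg_intervalIntegral_le_one (hSpos · v) hst)))).symm
    _ = _ := by
        rw [integral_sub hφint hUint, ENNReal.ofReal_sub _
            (integral_nonneg fun v => mul_nonneg (Real.exp_pos _).le (hφpos v)),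
          tsub_add_cancel_of_le
            (ofReal_integral_exp_neg_primitive_mul_le hSmeas hSpos hφpos hφint hst)]

theorem lintegral_lintegral_gain_eq [SFinite μ]
    (hbmeas : Measurable fun q : ℝ × α × α => b q.1 q.2.1 q.2.2) (hbpos : ∀ t v v', 0 ≤ b t v v')
    (hSmeas : Measurable (Function.uncurry Sig)) (hφmeas : Measurable φ) (τ : ℝ) :
    ∫⁻ v, ∫⁻ v', ENNReal.ofReal (b τ v v' * Real.exp (-∫ r in s..τ, Sig r v') * φ v') ∂μ ∂μ =
      ∫⁻ v', (∫⁻ v, ENNReal.ofReal (b τ v v') ∂μ) *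
        ENNReal.ofReal (Real.exp (-∫ r in s..τ, Sig r v') * φ v') ∂μ := by
  simp_rw [mul_assoc]
  exact lintegral_lintegral_ofReal_mul_swap (hbmeas.comp (measurable_const.prodMk measurable_id))
    (hbpos τ) ((measurable_exp_neg_primitive_mul hSmeas hφmeas s).comp
      (measurable_const.prodMk measurable_id))

theorem lintegral_Ioc_gain_le [SFinite μ]
    (hbmeas : Measurable fun q : ℝ × α × α => b q.1 q.2.1 q.2.2) (hbpos : ∀ t v v', 0 ≤ b t v v')
    (hsub : ∀ᵐ p : ℝ × α ∂(volume.restrict (Ioc s t)).prod μ,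
      ∫⁻ v, ENNReal.ofReal (b p.1 v p.2) ∂μ ≤ ENNReal.ofReal (Sig p.1 p.2))
    (hSmeas : Measurable (Function.uncurry Sig)) (hφmeas : Measurable φ) :
    ∫⁻ τ in Ioc s t, ∫⁻ v, ∫⁻ v',
        ENNReal.ofReal (b τ v v' * Real.exp (-∫ r in s..τ, Sig r v') * φ v') ∂μ ∂μ ≤
      ∫⁻ τ in Ioc s t, ∫⁻ v, ENNReal.ofReal (Sig τ v) *
        ENNReal.ofReal (Real.exp (-∫ r in s..τ, Sig r v) * φ v) ∂μ := by
  simp_rw [lintegral_lintegral_gain_eq hbmeas hbpos hSmeas hφmeas]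
  exact lintegral_mono_ae ((Measure.ae_ae_of_ae_prod hsub).mono fun τ hτ =>
    lintegral_mono_ae (hτ.mono fun v hv => mul_le_mul_left hv _))

theorem lintegral_Ioc_gain_eq [SFinite μ]
    (hbmeas : Measurable fun q : ℝ × α × α => b q.1 q.2.1 q.2.2) (hbpos : ∀ t v v', 0 ≤ b t v v')
    (hcrit : ∀ᵐ p : ℝ × α ∂(volume.restrict (Ioc s t)).prod μ,
      ∫⁻ v, ENNReal.ofReal (b p.1 v p.2) ∂μ = ENNReal.ofReal (Sig p.1 p.2))
    (hSmeas : Measurable (Function.uncurry Sig)) (hφmeas : Measurable φ) :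
    ∫⁻ τ in Ioc s t, ∫⁻ v, ∫⁻ v',
        ENNReal.ofReal (b τ v v' * Real.exp (-∫ r in s..τ, Sig r v') * φ v') ∂μ ∂μ =
      ∫⁻ τ in Ioc s t, ∫⁻ v, ENNReal.ofReal (Sig τ v) *
        ENNReal.ofReal (Real.exp (-∫ r in s..τ, Sig r v) * φ v) ∂μ := by
  simp_rw [lintegral_lintegral_gain_eq hbmeas hbpos hSmeas hφmeas]
  exact lintegral_congr_ae ((Measure.ae_ae_of_ae_prod hcrit).mono fun τ hτ =>
    lintegral_congr_ae (hτ.mono fun v hv => congrArg (· * _) hv))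

theorem measurable_lintegral_gain [SFinite μ]
    (hbmeas : Measurable fun q : ℝ × α × α => b q.1 q.2.1 q.2.2)
    (hSmeas : Measurable (Function.uncurry Sig)) (hφmeas : Measurable φ) (s : ℝ) :
    Measurable fun p : ℝ × α =>
      ∫⁻ v', ENNReal.ofReal (b p.1 p.2 v' * Real.exp (-∫ τ in s..p.1, Sig τ v') * φ v') ∂μ := by
  simp_rw [mul_assoc]
  exact Measurable.lintegral_prod_right' (ENNReal.measurable_ofReal.comp
    ((hbmeas.comp (measurable_fst.fst.prodMk (measurable_fst.snd.prodMk measurable_snd))).mul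
      ((measurable_exp_neg_primitive_mul hSmeas hφmeas s).comp
        (measurable_fst.fst.prodMk measurable_snd))))

end

theorem honesty_stmt14 {d : ℕ} (μ : Measure (EuclideanSpace ℝ (Fin d))) [SFinite μ]
    (Sig : ℝ → EuclideanSpace ℝ (Fin d) → ℝ)
    (b : ℝ → EuclideanSpace ℝ (Fin d) → EuclideanSpace ℝ (Fin d) → ℝ)
    (hSmeas : Measurable (Function.uncurry Sig))
    (hSpos : ∀ t v, 0 ≤ Sig t v)
    (hSloc : ∀ᵐ v ∂μ, ∀ T : ℝ, IntegrableOn (fun t => Sig t v) (Set.Icc 0 T) volume)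
    (hbmeas : Measurable (fun q : ℝ × EuclideanSpace ℝ (Fin d) × EuclideanSpace ℝ (Fin d) =>
      b q.1 q.2.1 q.2.2))
    (hbpos : ∀ t v v', 0 ≤ b t v v')
    (hsub : ∀ᵐ p : ℝ × EuclideanSpace ℝ (Fin d) ∂((volume.restrict (Set.Ici (0:ℝ))).prod μ),
      (∫⁻ v, ENNReal.ofReal (b p.1 v p.2) ∂μ) ≤ ENNReal.ofReal (Sig p.1 p.2))
    (φ : EuclideanSpace ℝ (Fin d) → ℝ)
    (hφmeas : Measurable φ) (hφpos : ∀ v, 0 ≤ φ v) (hφint : Integrable φ μ)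
    (s : ℝ) (hs : 0 ≤ s) :
    (∀ᵐ t ∂(volume.restrict (Set.Ici s)),
      (∫⁻ v, (∫⁻ v', ENNReal.ofReal (b t v' v) ∂μ) *
          ENNReal.ofReal (Real.exp (-(∫ τ in s..t, Sig τ v)) * φ v) ∂μ) < ⊤) ∧
    (AEMeasurable (fun p : ℝ × EuclideanSpace ℝ (Fin d) =>
        ∫⁻ v', ENNReal.ofReal (b p.1 p.2 v' * Real.exp (-(∫ τ in s..p.1, Sig τ v')) * φ v') ∂μ)
      ((volume.restrict (Set.Ici s)).prod μ)) ∧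
    (∀ t : ℝ, s ≤ t →
      (∫⁻ τ in Set.Ioc s t, ∫⁻ v, ∫⁻ v',
          ENNReal.ofReal (b τ v v' * Real.exp (-(∫ r in s..τ, Sig r v')) * φ v') ∂μ ∂μ)
        + ENNReal.ofReal (∫ v, Real.exp (-(∫ τ in s..t, Sig τ v)) * φ v ∂μ)
        ≤ ENNReal.ofReal (∫ v, φ v ∂μ)) ∧
    ((∀ᵐ p : ℝ × EuclideanSpace ℝ (Fin d) ∂((volume.restrict (Set.Ici (0:ℝ))).prod μ),
        (∫⁻ v, ENNReal.ofReal (b p.1 v p.2) ∂μ) = ENNReal.ofReal (Sig p.1 p.2)) →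
      ∀ t : ℝ, s ≤ t →
        (∫⁻ τ in Set.Ioc s t, ∫⁻ v, ∫⁻ v',
            ENNReal.ofReal (b τ v v' * Real.exp (-(∫ r in s..τ, Sig r v')) * φ v') ∂μ ∂μ)
          + ENNReal.ofReal (∫ v, Real.exp (-(∫ τ in s..t, Sig τ v)) * φ v ∂μ)
          = ENNReal.ofReal (∫ v, φ v ∂μ)) := by
  have hac (t : ℝ) : (volume.restrict (Ioc s t)).prod μ ≪ (volume.restrict (Ici 0)).prod μ :=
    (Measure.absolutelyContinuous_of_le (Measure.restrict_mono
      (Ioc_subset_Icc_self.trans (Icc_subset_Ici_self.trans (Ici_subset_Ici.2 hs))) le_rfl)).prod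
      Measure.AbsolutelyContinuous.rfl
  have hSint (t : ℝ) : ∀ᵐ v ∂μ, IntegrableOn (fun τ => Sig τ v) (Ioc s t) :=
    hSloc.mono fun v hv => (hv t).mono_set (Ioc_subset_Icc_self.trans (Icc_subset_Icc_left hs))
  have hloss (t : ℝ) (hst : s ≤ t) :=
    lintegral_Ioc_absorption_add_eq hSmeas hSpos (hSint t) hφmeas hφpos hφint hst
  have hgain := measurable_lintegral_gain (μ := μ) hbmeas hSmeas hφmeas s
  have hbalance (t : ℝ) (hst : s ≤ t) :=
    (add_le_add_left (lintegral_Ioc_gain_le hbmeas hbpos ((hac t).ae_le hsub) hSmeas hφmeas)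
      _).trans_eq (hloss t hst)
  refine ⟨?_, hgain.aemeasurable, hbalance, fun hcrit t hst => ?_⟩
  · simpa only [lintegral_lintegral_gain_eq hbmeas hbpos hSmeas hφmeas] using
      ae_restrict_Ici_lt_top_of_lintegral_Ioc_ne_top hgain.lintegral_prod_right' fun t hst =>
        ne_top_of_le_ne_top ENNReal.ofReal_ne_top (le_self_add.trans (hbalance t hst))
  · rw [lintegral_Ioc_gain_eq hbmeas hbpos ((hac t).ae_le hcrit) hSmeas hφmeas, hloss t hst]
end

section
/- Let μ, Σ, b satisfy the kinetic assumptions and fix t ≥ 0. If (φ_n)ₙ is a nondecreasing sequence of nonnegative functions in L¹(V,dμ) with φ_n ∈ D(B_h(t)) for every n, sup_n ∫_V σ(t,v) φ_n(v) dμ(v) < ∞, and φ_n → φ in L¹(V,dμ), then ∫_V σ(t,v) φ(v) dμ(v) < ∞ (i.e. φ ∈ D(B_h(t))) and B_h(t)φ_n → B_h(t)φ in L¹(V,dμ); i.e. the operators B_h(t) are increasingly closed. -/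
/-!
Since the `φₙ` increase, their L¹ convergence upgrades to `φₙ ↑ φ` almost everywhere, so monotone
convergence gives `∫ σ φₙ ↑ ∫ σ φ ≤ M < ∞`. As the kernel is nonnegative and `φₙ ≤ φ`, we have
`|B φₙ - B φ| = B (φ - φₙ)`, and by Tonelli `∫ B (φ - φₙ) = ∫ σ φ - ∫ σ φₙ → 0`.
-/

open MeasureTheory Set Filter Topology
open scoped ENNReal

section MonotoneLimits

variable {α : Type*} [MeasurableSpace α] {μ : Measure α} {f : ℕ → α → ℝ} {g : α → ℝ}

theorem tendstoInMeasure_of_tendsto_integral_abs_sub (hf : ∀ n, Integrable (f n) μ)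
    (hg : Integrable g μ) (h : Tendsto (fun n => ∫ x, |f n x - g x| ∂μ) atTop (𝓝 0)) :
    TendstoInMeasure μ f atTop g := by
  refine tendstoInMeasure_of_tendsto_eLpNorm one_ne_zero (fun n => (hf n).aestronglyMeasurable)
    hg.aestronglyMeasurable ?_
  have h_eq : ∀ n, eLpNorm (f n - g) 1 μ = ENNReal.ofReal (∫ x, |f n x - g x| ∂μ) := fun n => by
    rw [eLpNorm_one_eq_lintegral_enorm, ← ofReal_integral_norm_eq_lintegral_enorm ((hf n).sub hg)]
    rfl
  simpa [h_eq] using ENNReal.tendsto_ofReal h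

theorem ae_tendsto_of_monotone_of_tendstoInMeasure (hmono : ∀ᵐ x ∂μ, Monotone fun n => f n x)
    (h : TendstoInMeasure μ f atTop g) : ∀ᵐ x ∂μ, Tendsto (fun n => f n x) atTop (𝓝 (g x)) := by
  obtain ⟨ns, hns, hae⟩ := h.exists_seq_tendsto_ae
  filter_upwards [hae, hmono] with x hx hmx
  exact (tendsto_iff_tendsto_subseq_of_monotone hmx hns.tendsto_atTop).2 hx

theorem tendsto_lintegral_mul_ofReal_of_monotone {w : α → ℝ≥0∞} (hw : Measurable w)
    (hf : ∀ n, Measurable (f n)) (hmono : ∀ᵐ x ∂μ, Monotone fun n => f n x)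
    (hlim : ∀ᵐ x ∂μ, Tendsto (fun n => f n x) atTop (𝓝 (g x))) :
    Tendsto (fun n => ∫⁻ x, w x * ENNReal.ofReal (f n x) ∂μ) atTop
      (𝓝 (∫⁻ x, w x * ENNReal.ofReal (g x) ∂μ)) := by
  have hmono' : ∀ᵐ x ∂μ, Monotone fun n => w x * ENNReal.ofReal (f n x) := by
    filter_upwards [hmono] with x hx
    exact fun m n hmn => mul_le_mul_right (ENNReal.ofReal_le_ofReal (hx hmn)) _
  refine lintegral_tendsto_of_tendsto_of_monotone
    (fun n => (hw.mul (hf n).ennreal_ofReal).aemeasurable) hmono' ?_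
  filter_upwards [hmono, hmono', hlim] with x hx hx' hxlim
  -- `w x * ·` is not continuous at `0` when `w x = ∞`, but it commutes with suprema.
  have h_sup : ENNReal.ofReal (g x) = ⨆ n, ENNReal.ofReal (f n x) :=
    tendsto_nhds_unique (ENNReal.tendsto_ofReal hxlim)
      (tendsto_atTop_iSup fun m n hmn => ENNReal.ofReal_le_ofReal (hx hmn))
  rw [h_sup, ENNReal.mul_iSup]
  exact tendsto_atTop_iSup hx'

end MonotoneLimits

section IntegralKernel

variable {α β : Type*} [MeasurableSpace α] [MeasurableSpace β] {μ : Measure α} {ν : Measure β}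

theorem lintegral_lintegral_mul_eq_lintegral_mul [SFinite μ] [SFinite ν] {κ : α → β → ℝ≥0∞}
    (hκ : Measurable (Function.uncurry κ)) {ψ : β → ℝ≥0∞} (hψ : Measurable ψ) :
    ∫⁻ x, ∫⁻ y, κ x y * ψ y ∂ν ∂μ = ∫⁻ y, (∫⁻ x, κ x y ∂μ) * ψ y ∂ν := by
  rw [lintegral_lintegral_swap (hκ.mul (hψ.comp measurable_snd)).aemeasurable]
  exact lintegral_congr fun y =>
    lintegral_mul_const _ (hκ.comp (measurable_id.prodMk measurable_const))

theorem ofReal_integral_eq_lintegral_ofReal_of_ne_top {h : β → ℝ} (h0 : 0 ≤ᵐ[ν] h)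
    (hm : AEStronglyMeasurable h ν) (hfin : ∫⁻ y, ENNReal.ofReal (h y) ∂ν ≠ ∞) :
    ENNReal.ofReal (∫ y, h y ∂ν) = ∫⁻ y, ENNReal.ofReal (h y) ∂ν := by
  rw [integral_eq_lintegral_of_nonneg_ae h0 hm, ENNReal.ofReal_toReal hfin]

theorem ofReal_integral_mul_eq_lintegral {w ψ : β → ℝ} (hw : Measurable w) (hw0 : ∀ y, 0 ≤ w y)
    (hψ : Measurable ψ) (hψ0 : 0 ≤ᵐ[ν] ψ)
    (hfin : ∫⁻ y, ENNReal.ofReal (w y) * ENNReal.ofReal (ψ y) ∂ν ≠ ∞) :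
    ENNReal.ofReal (∫ y, w y * ψ y ∂ν) =
      ∫⁻ y, ENNReal.ofReal (w y) * ENNReal.ofReal (ψ y) ∂ν := by
  have h_eq : ∀ y, ENNReal.ofReal (w y * ψ y) = ENNReal.ofReal (w y) * ENNReal.ofReal (ψ y) :=
    fun y => ENNReal.ofReal_mul (hw0 y)
  simp only [← h_eq] at hfin ⊢
  exact ofReal_integral_eq_lintegral_ofReal_of_ne_top
    (hψ0.mono fun y hy => mul_nonneg (hw0 y) hy) (hw.mul hψ).aestronglyMeasurable hfin

theorem ofReal_abs_integral_mul_sub {w ψ φ : β → ℝ} (hw : Measurable w) (hw0 : ∀ y, 0 ≤ w y)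
    (hψ : Measurable ψ) (hφ : Measurable φ) (hψ0 : ∀ y, 0 ≤ ψ y) (hψφ : ψ ≤ᵐ[ν] φ)
    (hfin : ∫⁻ y, ENNReal.ofReal (w y) * ENNReal.ofReal (φ y) ∂ν ≠ ∞) :
    ENNReal.ofReal |∫ y, w y * ψ y ∂ν - ∫ y, w y * φ y ∂ν| =
      ∫⁻ y, ENNReal.ofReal (w y) * ENNReal.ofReal (φ y) ∂ν -
        ∫⁻ y, ENNReal.ofReal (w y) * ENNReal.ofReal (ψ y) ∂ν := by
  have hφ0 : 0 ≤ᵐ[ν] φ := hψφ.mono fun y hy => (hψ0 y).trans hy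
  have h_mono : ∫⁻ y, ENNReal.ofReal (w y) * ENNReal.ofReal (ψ y) ∂ν ≤
      ∫⁻ y, ENNReal.ofReal (w y) * ENNReal.ofReal (φ y) ∂ν :=
    lintegral_mono_ae (hψφ.mono fun y hy => mul_le_mul_right (ENNReal.ofReal_le_ofReal hy) _)
  have hφ_eq := ofReal_integral_mul_eq_lintegral hw hw0 hφ hφ0 hfin
  have hψ_eq := ofReal_integral_mul_eq_lintegral hw hw0 hψ (ae_of_all _ hψ0)
    (ne_top_of_le_ne_top hfin h_mono)
  have hψ_int_nonneg : 0 ≤ ∫ y, w y * ψ y ∂ν :=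
    integral_nonneg fun y => mul_nonneg (hw0 y) (hψ0 y)
  have h_le : ∫ y, w y * ψ y ∂ν ≤ ∫ y, w y * φ y ∂ν := by
    rw [← ENNReal.ofReal_le_ofReal_iff (integral_nonneg_of_ae
      (hφ0.mono fun y hy => mul_nonneg (hw0 y) hy)), hφ_eq, hψ_eq]
    exact h_mono
  rw [abs_sub_comm, abs_of_nonneg (sub_nonneg.2 h_le), ENNReal.ofReal_sub _ hψ_int_nonneg,
    hφ_eq, hψ_eq]

theorem lintegral_ofReal_abs_integral_kernel_sub [SFinite μ] [SFinite ν] {k : α → β → ℝ}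
    (hk : Measurable (Function.uncurry k)) (hk0 : ∀ x y, 0 ≤ k x y) {ψ φ : β → ℝ}
    (hψ : Measurable ψ) (hφ : Measurable φ) (hψ0 : ∀ y, 0 ≤ ψ y) (hψφ : ψ ≤ᵐ[ν] φ)
    (hfin : ∫⁻ y, (∫⁻ x, ENNReal.ofReal (k x y) ∂μ) * ENNReal.ofReal (φ y) ∂ν ≠ ∞) :
    ∫⁻ x, ENNReal.ofReal |∫ y, k x y * ψ y ∂ν - ∫ y, k x y * φ y ∂ν| ∂μ =
      ∫⁻ y, (∫⁻ x, ENNReal.ofReal (k x y) ∂μ) * ENNReal.ofReal (φ y) ∂ν -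
        ∫⁻ y, (∫⁻ x, ENNReal.ofReal (k x y) ∂μ) * ENNReal.ofReal (ψ y) ∂ν := by
  have hκ : Measurable (Function.uncurry fun x y => ENNReal.ofReal (k x y)) := hk.ennreal_ofReal
  have hkx : ∀ x, Measurable (k x) := fun x => hk.comp (measurable_const.prodMk measurable_id)
  set Bφ := fun x => ∫⁻ y, ENNReal.ofReal (k x y) * ENNReal.ofReal (φ y) ∂ν
  set Bψ := fun x => ∫⁻ y, ENNReal.ofReal (k x y) * ENNReal.ofReal (ψ y) ∂ν
  have hBφ_int : ∫⁻ x, Bφ x ∂μ = _ := lintegral_lintegral_mul_eq_lintegral_mul hκ hφ.ennreal_ofReal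
  have hBψ_int : ∫⁻ x, Bψ x ∂μ = _ := lintegral_lintegral_mul_eq_lintegral_mul hκ hψ.ennreal_ofReal
  have hBψ_le : Bψ ≤ Bφ := fun x =>
    lintegral_mono_ae (hψφ.mono fun y hy => mul_le_mul_right (ENNReal.ofReal_le_ofReal hy) _)
  -- Finiteness of `Bφ` (from Tonelli) is what makes the pointwise truncated subtraction exact.
  have hBφ_fin : ∀ᵐ x ∂μ, Bφ x < ∞ :=
    ae_lt_top (hκ.mul (hφ.ennreal_ofReal.comp measurable_snd)).lintegral_prod_right'
      (hBφ_int ▸ hfin)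
  calc ∫⁻ x, ENNReal.ofReal |∫ y, k x y * ψ y ∂ν - ∫ y, k x y * φ y ∂ν| ∂μ
      = ∫⁻ x, Bφ x - Bψ x ∂μ := by
        refine lintegral_congr_ae ?_
        filter_upwards [hBφ_fin] with x hx
        exact ofReal_abs_integral_mul_sub (hkx x) (hk0 x) hψ hφ hψ0 hψφ hx.ne
    _ = ∫⁻ x, Bφ x ∂μ - ∫⁻ x, Bψ x ∂μ :=
        lintegral_sub (hκ.mul (hψ.ennreal_ofReal.comp measurable_snd)).lintegral_prod_right'
          (ne_top_of_le_ne_top (hBφ_int ▸ hfin) (lintegral_mono hBψ_le)) (ae_of_all _ hBψ_le)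
    _ = _ := by rw [hBφ_int, hBψ_int]

theorem tendsto_integral_abs_integral_kernel_sub [SFinite μ] [SFinite ν] {k : α → β → ℝ}
    (hk : Measurable (Function.uncurry k)) (hk0 : ∀ x y, 0 ≤ k x y) {f : ℕ → β → ℝ} {g : β → ℝ}
    (hf : ∀ n, Measurable (f n)) (hg : Measurable g) (hf0 : ∀ n y, 0 ≤ f n y)
    (hfg : ∀ᵐ y ∂ν, ∀ n, f n y ≤ g y)
    (hlim : Tendsto (fun n => ∫⁻ y, (∫⁻ x, ENNReal.ofReal (k x y) ∂μ) * ENNReal.ofReal (f n y) ∂ν)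
      atTop (𝓝 (∫⁻ y, (∫⁻ x, ENNReal.ofReal (k x y) ∂μ) * ENNReal.ofReal (g y) ∂ν)))
    (hfin : ∫⁻ y, (∫⁻ x, ENNReal.ofReal (k x y) ∂μ) * ENNReal.ofReal (g y) ∂ν ≠ ∞) :
    Tendsto (fun n => ∫ x, |∫ y, k x y * f n y ∂ν - ∫ y, k x y * g y ∂ν| ∂μ) atTop (𝓝 0) := by
  have hBg : StronglyMeasurable fun x => ∫ y, k x y * g y ∂ν :=
    (hk.mul (hg.comp measurable_snd)).stronglyMeasurable.integral_prod_right'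
  have hBf : ∀ n, StronglyMeasurable fun x => ∫ y, k x y * f n y ∂ν := fun n =>
    (hk.mul ((hf n).comp measurable_snd)).stronglyMeasurable.integral_prod_right'
  have h_eq : ∀ n, ∫ x, |∫ y, k x y * f n y ∂ν - ∫ y, k x y * g y ∂ν| ∂μ =
      (∫⁻ y, (∫⁻ x, ENNReal.ofReal (k x y) ∂μ) * ENNReal.ofReal (g y) ∂ν -
        ∫⁻ y, (∫⁻ x, ENNReal.ofReal (k x y) ∂μ) * ENNReal.ofReal (f n y) ∂ν).toReal := fun n => by
    have h_meas : Measurable fun x => |∫ y, k x y * f n y ∂ν - ∫ y, k x y * g y ∂ν| :=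
      ((hBf n).measurable.sub hBg.measurable).abs
    rw [integral_eq_lintegral_of_nonneg_ae (ae_of_all _ fun x => abs_nonneg _)
      h_meas.aestronglyMeasurable,
      lintegral_ofReal_abs_integral_kernel_sub hk hk0 (hf n) hg (hf0 n)
        (hfg.mono fun y hy => hy n) hfin]
  have h_sub := ENNReal.Tendsto.sub tendsto_const_nhds hlim (Or.inl hfin)
  rw [tsub_self] at h_sub
  simpa only [h_eq, Function.comp_def, ENNReal.toReal_zero] using
    (ENNReal.tendsto_toReal ENNReal.zero_ne_top).comp h_sub

end IntegralKernel

theorem honesty_stmt15_general {d : ℕ} (μ : Measure (EuclideanSpace ℝ (Fin d))) [SFinite μ]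
    (b : ℝ → EuclideanSpace ℝ (Fin d) → EuclideanSpace ℝ (Fin d) → ℝ)
    (hbmeas : Measurable (fun q : ℝ × EuclideanSpace ℝ (Fin d) × EuclideanSpace ℝ (Fin d) =>
      b q.1 q.2.1 q.2.2))
    (hbpos : ∀ t v v', 0 ≤ b t v v')
    (t : ℝ)
    (φn : ℕ → EuclideanSpace ℝ (Fin d) → ℝ) (φ : EuclideanSpace ℝ (Fin d) → ℝ)
    (hφnmeas : ∀ n, Measurable (φn n)) (hφnpos : ∀ n v, 0 ≤ φn n v)
    (hφnint : ∀ n, Integrable (φn n) μ)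
    (hmono : ∀ n, ∀ᵐ v ∂μ, φn n v ≤ φn (n+1) v)
    (hφmeas : Measurable φ) (hφint : Integrable φ μ)
    (hsup : ∃ M : ℝ≥0∞, M < ⊤ ∧ ∀ n,
      (∫⁻ v, (∫⁻ v', ENNReal.ofReal (b t v' v) ∂μ) * ENNReal.ofReal (φn n v) ∂μ) ≤ M)
    (hconv : Filter.Tendsto (fun n => ∫ v, |φn n v - φ v| ∂μ) Filter.atTop (nhds 0)) :
    (∫⁻ v, (∫⁻ v', ENNReal.ofReal (b t v' v) ∂μ) * ENNReal.ofReal (φ v) ∂μ) < ⊤ ∧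
    Filter.Tendsto
      (fun n => ∫ v, |(∫ v', b t v v' * φn n v' ∂μ) - ∫ v', b t v v' * φ v' ∂μ| ∂μ)
      Filter.atTop (nhds 0) := by
  obtain ⟨M, hM, hφn_le_M⟩ := hsup
  have hb : Measurable (Function.uncurry (b t)) :=
    hbmeas.comp (measurable_const.prodMk measurable_id)
  have hσ : Measurable fun v => ∫⁻ v', ENNReal.ofReal (b t v' v) ∂μ :=
    hb.ennreal_ofReal.lintegral_prod_left'
  have h_monotone : ∀ᵐ v ∂μ, Monotone fun n => φn n v :=
    (ae_all_iff.2 hmono).mono fun v hv => monotone_nat_of_le_succ hv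
  have h_lim : ∀ᵐ v ∂μ, Tendsto (fun n => φn n v) atTop (𝓝 (φ v)) :=
    ae_tendsto_of_monotone_of_tendstoInMeasure h_monotone
      (tendstoInMeasure_of_tendsto_integral_abs_sub hφnint hφint hconv)
  have h_le : ∀ᵐ v ∂μ, ∀ n, φn n v ≤ φ v := by
    filter_upwards [h_monotone, h_lim] with v hv hv_lim
    exact fun n => hv.ge_of_tendsto hv_lim n
  have h_mct := tendsto_lintegral_mul_ofReal_of_monotone hσ hφnmeas h_monotone h_lim
  have h_fin := (le_of_tendsto' h_mct hφn_le_M).trans_lt hM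
  exact ⟨h_fin, tendsto_integral_abs_integral_kernel_sub hb (hbpos t) hφnmeas hφmeas hφnpos h_le
    h_mct h_fin.ne⟩

theorem honesty_stmt15 {d : ℕ} (μ : Measure (EuclideanSpace ℝ (Fin d))) [SFinite μ]
    (Sig : ℝ → EuclideanSpace ℝ (Fin d) → ℝ)
    (b : ℝ → EuclideanSpace ℝ (Fin d) → EuclideanSpace ℝ (Fin d) → ℝ)
    (hSmeas : Measurable (Function.uncurry Sig))
    (hSpos : ∀ t v, 0 ≤ Sig t v)
    (hSloc : ∀ᵐ v ∂μ, ∀ T : ℝ, IntegrableOn (fun t => Sig t v) (Set.Icc 0 T) volume)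
    (hbmeas : Measurable (fun q : ℝ × EuclideanSpace ℝ (Fin d) × EuclideanSpace ℝ (Fin d) =>
      b q.1 q.2.1 q.2.2))
    (hbpos : ∀ t v v', 0 ≤ b t v v')
    (hsub : ∀ᵐ p : ℝ × EuclideanSpace ℝ (Fin d) ∂((volume.restrict (Set.Ici (0:ℝ))).prod μ),
      (∫⁻ v, ENNReal.ofReal (b p.1 v p.2) ∂μ) ≤ ENNReal.ofReal (Sig p.1 p.2))
    (t : ℝ) (ht : 0 ≤ t)
    (φn : ℕ → EuclideanSpace ℝ (Fin d) → ℝ) (φ : EuclideanSpace ℝ (Fin d) → ℝ)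
    (hφnmeas : ∀ n, Measurable (φn n)) (hφnpos : ∀ n v, 0 ≤ φn n v)
    (hφnint : ∀ n, Integrable (φn n) μ)
    (hmono : ∀ n, ∀ᵐ v ∂μ, φn n v ≤ φn (n+1) v)
    (hφmeas : Measurable φ) (hφint : Integrable φ μ)
    (hdom : ∀ n,
      (∫⁻ v, (∫⁻ v', ENNReal.ofReal (b t v' v) ∂μ) * ENNReal.ofReal (φn n v) ∂μ) < ⊤)
    (hsup : ∃ M : ℝ≥0∞, M < ⊤ ∧ ∀ n,
      (∫⁻ v, (∫⁻ v', ENNReal.ofReal (b t v' v) ∂μ) * ENNReal.ofReal (φn n v) ∂μ) ≤ M)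
    (hconv : Filter.Tendsto (fun n => ∫ v, |φn n v - φ v| ∂μ) Filter.atTop (nhds 0)) :
    (∫⁻ v, (∫⁻ v', ENNReal.ofReal (b t v' v) ∂μ) * ENNReal.ofReal (φ v) ∂μ) < ⊤ ∧
    Filter.Tendsto
      (fun n => ∫ v, |(∫ v', b t v v' * φn n v' ∂μ) - ∫ v', b t v v' * φ v' ∂μ| ∂μ)
      Filter.atTop (nhds 0) :=
  honesty_stmt15_general μ b hbmeas hbpos t φn φ hφnmeas hφnpos hφnint hmono hφmeas hφint hsup hconv
end
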